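/- Let (M,χ) be a module of the system with m = |M|, and suppose the relative quality functions satisfy q_j(A) = 1/(n·C(n−1,|A|)) for every j ∈ M and A ⊆ C∖{j}. Then for every k ∈ {1,…,m}, p_M^{(k)} = p_k^M · ∫_0^1 r_{k,m}(t) · (∑_{B⊆C∖M} t^{|B|}·(1−t)^{n−m−|B|}·Δ_[M]ψ(B)) dt, where r_{k,m}(t) = m·C(m−1, m−k)·t^{m−k}·(1−t)^{k−1} is the probability density of the beta distribution on [0,1] with parameters α = m−k+1 and β = k. -/

import Mathlib

open MeasureTheory Finset

/-- Lifetime of the (sub)system on component set `D` with structure function `χ`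
(the maximum over the sets `A ⊆ D` with `χ A = 1` of `min_{i ∈ A} T i`). -/
noncomputable def sysLifeOn {Ω : Type*} {n : ℕ} (T : Fin n → Ω → ℝ)
    (D : Finset (Fin n)) (χ : Finset (Fin n) → ℝ) (ω : Ω) : ℝ :=
  if h : (D.powerset.filter fun A => χ A = 1).Nonempty then
    (D.powerset.filter fun A => χ A = 1).sup' h
      (fun A => if hA : A.Nonempty then A.inf' hA fun i => T i ω else 0)
  else 0

/-- The `k`-th order statistic of the lifetimes `(T i)_{i ∈ M}`. -/
noncomputable def orderStat {Ω : Type*} {n : ℕ} (T : Fin n → Ω → ℝ)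
    (M : Finset (Fin n)) (k : ℕ) (ω : Ω) : ℝ :=
  ((M.val.map fun i => T i ω).sort (· ≤ ·)).getD (k - 1) 0

/-- The relative quality function `q_j(A) = Pr(max_{i ∈ C∖A} T_i = T_j < min_{i ∈ A} T_i)`. -/
noncomputable def relQual {Ω : Type*} [MeasurableSpace Ω] {n : ℕ} (μ : Measure Ω)
    (T : Fin n → Ω → ℝ) (j : Fin n) (A : Finset (Fin n)) : ℝ :=
  (μ {ω | (∀ i ∉ A, T i ω ≤ T j ω) ∧ ∀ i ∈ A, T j ω < T i ω}).toReal

/-!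
Almost surely the lifetimes are distinct. Then everything is read off the set `A` of components
that survive the component `j` failing at the relevant time: `T_{k:M} = T_j` iff
`|A ∩ M| = m - k`, and `T_D = T_j` iff adding `j` switches the structure function on at `A ∩ D`.
So both `Pr(T_C = T_{k:M})` and `Pr(T_M = T_{k:M})` are sums over pairs `(j, A)` of such
increments weighted by `q_j(A)`, the probability that `A` is the survivor set of `j`.
When `q_j(A)` depends only on `|A|`, splitting `A` into `A ∩ M` and `B = A ∖ M`, and factoring
the increment of `φ` as the increment of `χ` times `Δ_[M]ψ(B)`, turns both probabilities into
the same pivotal count of `χ` times a sum over `B ⊆ C ∖ M`. As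
`1 / (n C(n-1, a)) = ∫₀¹ tᵃ (1-t)ⁿ⁻¹⁻ᵃ dt`, the sum for the system is the integral of the
statement divided by `m C(m-1, m-k)`, and the sum for the module is `1 / (m C(m-1, m-k))`.
-/

structure IsSemicoherentOn {α : Type*} (D : Finset α) (φ : Finset α → ℝ) : Prop where
  binary : ∀ A ⊆ D, φ A = 0 ∨ φ A = 1
  mono : ∀ A B, A ⊆ B → B ⊆ D → φ A ≤ φ B
  map_empty : φ ∅ = 0
  map_full : φ D = 1

namespace IsSemicoherentOn

variable {α : Type*} {D : Finset α} {φ : Finset α → ℝ}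

lemma eq_one_iff_exists_subset (hφ : IsSemicoherentOn D φ) {S : Finset α} (hS : S ⊆ D) :
    φ S = 1 ↔ ∃ A ∈ D.powerset.filter (φ · = 1), A ⊆ S := by
  refine ⟨fun h => ⟨S, mem_filter.2 ⟨mem_powerset.2 hS, h⟩, subset_rfl⟩, ?_⟩
  rintro ⟨A, hA, hAS⟩
  have hle := (mem_filter.1 hA).2 ▸ hφ.mono A S hAS hS
  exact (hφ.binary S hS).resolve_left (by linarith)

lemma nonempty_of_mem_filter (hφ : IsSemicoherentOn D φ) {A : Finset α}
    (hA : A ∈ D.powerset.filter (φ · = 1)) : A.Nonempty := by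
  rw [nonempty_iff_ne_empty]
  rintro rfl
  simp [hφ.map_empty] at hA

lemma sub_eq_ite (hφ : IsSemicoherentOn D φ) {A B : Finset α} (hAB : A ⊆ B) (hB : B ⊆ D) :
    φ B - φ A = if φ B = 1 ∧ φ A = 0 then 1 else 0 := by
  have hle := hφ.mono A B hAB hB
  rcases hφ.binary A (hAB.trans hB) with hA | hA <;> rcases hφ.binary B hB with hB | hB <;>
    simp_all
  linarith

lemma apply_ite_sub_apply_ite (hφ : IsSemicoherentOn D φ) {A B : Finset α} (hAB : A ⊆ B)
    (hB : B ⊆ D) (g : Bool → ℝ) :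
    g (if φ B = 1 then true else false) - g (if φ A = 1 then true else false)
      = (φ B - φ A) * (g true - g false) := by
  have hle := hφ.mono A B hAB hB
  rcases hφ.binary A (hAB.trans hB) with hA | hA <;> rcases hφ.binary B hB with hB | hB <;>
    simp_all

end IsSemicoherentOn

section SystemLifetime

variable {Ω : Type*} {n : ℕ} (T : Fin n → Ω → ℝ) {D : Finset (Fin n)} {φ : Finset (Fin n) → ℝ}

lemma le_sysLifeOn_iff (hφ : IsSemicoherentOn D φ) (t : ℝ) (ω : Ω) :
    t ≤ sysLifeOn T D φ ω ↔ φ (D.filter fun i => t ≤ T i ω) = 1 := by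
  have hne : (D.powerset.filter fun A => φ A = 1).Nonempty := ⟨D, by simp [hφ.map_full]⟩
  rw [hφ.eq_one_iff_exists_subset (filter_subset _ _), sysLifeOn, dif_pos hne, le_sup'_iff]
  refine exists_congr fun A => and_congr_right fun hA => ?_
  have hAD : A ⊆ D := mem_powerset.1 (mem_filter.1 hA).1
  rw [dif_pos (hφ.nonempty_of_mem_filter hA), le_inf'_iff, subset_iff]
  simp only [mem_filter]
  exact forall₂_congr fun i hi => (and_iff_right (hAD hi)).symm

lemma lt_sysLifeOn_iff (hφ : IsSemicoherentOn D φ) (t : ℝ) (ω : Ω) :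
    t < sysLifeOn T D φ ω ↔ φ (D.filter fun i => t < T i ω) = 1 := by
  have hne : (D.powerset.filter fun A => φ A = 1).Nonempty := ⟨D, by simp [hφ.map_full]⟩
  rw [hφ.eq_one_iff_exists_subset (filter_subset _ _), sysLifeOn, dif_pos hne, lt_sup'_iff]
  refine exists_congr fun A => and_congr_right fun hA => ?_
  have hAD : A ⊆ D := mem_powerset.1 (mem_filter.1 hA).1
  rw [dif_pos (hφ.nonempty_of_mem_filter hA), lt_inf'_iff, subset_iff]
  simp only [mem_filter]
  exact forall₂_congr fun i hi => (and_iff_right (hAD hi)).symm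

lemma sysLifeOn_eq_iff (hφ : IsSemicoherentOn D φ) {ω : Ω}
    (hinj : Function.Injective fun i => T i ω) {j : Fin n} (hj : j ∈ D) :
    sysLifeOn T D φ ω = T j ω ↔
      φ (insert j (D.filter fun i => T j ω < T i ω)) = 1 ∧
        φ (D.filter fun i => T j ω < T i ω) = 0 := by
  have hle :
      D.filter (fun i => T j ω ≤ T i ω) = insert j (D.filter fun i => T j ω < T i ω) := by
    ext i
    simp only [mem_filter, mem_insert, le_iff_lt_or_eq]
    constructor
    · rintro ⟨hi, hlt | heq⟩
      exacts [Or.inr ⟨hi, hlt⟩, Or.inl (hinj heq).symm]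
    · rintro (rfl | ⟨hi, hlt⟩)
      exacts [⟨hj, Or.inr rfl⟩, ⟨hi, Or.inl hlt⟩]
  rw [eq_comm, eq_iff_le_not_lt, le_sysLifeOn_iff T hφ, lt_sysLifeOn_iff T hφ, hle]
  rcases hφ.binary _ (filter_subset (fun i => T j ω < T i ω) D) with h | h <;> simp [h]

end SystemLifetime

lemma List.Pairwise.length_filter_lt_getElem {α : Type*} [LinearOrder α] {l : List α}
    (hl : l.Pairwise (· < ·)) {i : ℕ} (hi : i < l.length) :
    (l.filter (· < l[i])).length = i := by
  obtain ⟨x, hx⟩ : ∃ x, l[i] = x := ⟨_, rfl⟩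
  rw [List.pairwise_iff_getElem] at hl
  rw [hx, ← List.take_append_drop i l, List.filter_append, List.length_append,
    List.filter_eq_self.2, List.filter_eq_nil_iff.2]
  · simp [hi.le]
  · intro y hy
    obtain ⟨p, hp, rfl⟩ := List.mem_drop_iff_getElem.1 hy
    rw [← hx]
    rcases Nat.eq_zero_or_pos p with rfl | hp0
    · simp
    · simpa using (hl i (i + p) hi (by omega) (by omega)).le
  · intro y hy
    obtain ⟨p, hp, rfl⟩ := List.mem_take_iff_getElem.1 hy
    rw [← hx]
    simpa using hl p i _ hi (by omega)

section OrderStatistic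

variable {Ω : Type*} {n : ℕ} (T : Fin n → Ω → ℝ) (M : Finset (Fin n)) (ω : Ω) {k : ℕ}

lemma exists_orderStat_eq (hk1 : 1 ≤ k) (hkm : k ≤ #M) :
    ∃ j ∈ M, orderStat T M k ω = T j ω := by
  have hlen : k - 1 < ((M.val.map fun i => T i ω).sort (· ≤ ·)).length := by
    simp; omega
  obtain ⟨j, hj, hjx⟩ := Multiset.mem_map.1
    ((Multiset.mem_sort _).1 (List.getElem_mem hlen))
  exact ⟨j, hj, by rw [orderStat, List.getD_eq_getElem _ _ hlen, hjx]⟩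

variable {M ω}

lemma card_filter_lt_add_card_filter_gt (hinj : Function.Injective fun i => T i ω)
    {j : Fin n} (hj : j ∈ M) :
    #(M.filter fun i => T i ω < T j ω) + #(M.filter fun i => T j ω < T i ω) + 1 = #M := by
  have hle :
      M.filter (fun i => ¬ T j ω < T i ω) = insert j (M.filter fun i => T i ω < T j ω) := by
    ext i
    simp only [mem_filter, mem_insert, not_lt, le_iff_lt_or_eq]
    constructor
    · rintro ⟨hi, hlt | heq⟩
      exacts [Or.inr ⟨hi, hlt⟩, Or.inl (hinj heq)]
    · rintro (rfl | ⟨hi, hlt⟩)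
      exacts [⟨hj, Or.inr rfl⟩, ⟨hi, Or.inl hlt⟩]
  have hsplit := card_filter_add_card_filter_not (s := M) (p := fun i => T j ω < T i ω)
  rw [hle, card_insert_of_notMem (by simp)] at hsplit
  omega

lemma orderStat_eq_iff (hinj : Function.Injective fun i => T i ω) (hk1 : 1 ≤ k) (hkm : k ≤ #M)
    {j : Fin n} (hj : j ∈ M) :
    orderStat T M k ω = T j ω ↔ #(M.filter fun i => T j ω < T i ω) = #M - k := by
  set l := (M.val.map fun i => T i ω).sort (· ≤ ·)
  have hnodup : (M.val.map fun i => T i ω).Nodup := M.nodup.map hinj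
  have hl : l.Pairwise (· < ·) := by
    have hl : l.Nodup := by rw [← Multiset.coe_nodup, Multiset.sort_eq]; exact hnodup
    exact ((Multiset.pairwise_sort _ _).and hl).imp fun h => lt_of_le_of_ne h.1 h.2
  have hlen : k - 1 < l.length := by simp [l]; omega
  obtain ⟨p, hp, hpj⟩ := List.mem_iff_getElem.1
    ((Multiset.mem_sort _).2 (Multiset.mem_map_of_mem _ hj) : T j ω ∈ l)
  have hrank : #(M.filter fun i => T i ω < T j ω) = p := by
    rw [← hl.length_filter_lt_getElem hp, hpj, ← List.countP_eq_length_filter,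
      ← Multiset.coe_countP, Multiset.sort_eq, Multiset.countP_map]
    rfl
  have hkp : l[k - 1] = T j ω ↔ k - 1 = p := by rw [← hpj, hl.nodup.getElem_inj_iff]
  rw [orderStat, List.getD_eq_getElem _ _ hlen, hkp]
  have := card_filter_lt_add_card_filter_gt T hinj hj
  omega

end OrderStatistic

section Survivors

variable {Ω : Type*} {n : ℕ} (T : Fin n → Ω → ℝ)

noncomputable def survivors (j : Fin n) (ω : Ω) : Finset (Fin n) :=
  univ.filter fun i => T j ω < T i ω

lemma survivors_inter (j : Fin n) (ω : Ω) (D : Finset (Fin n)) :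
    survivors T j ω ∩ D = D.filter fun i => T j ω < T i ω := by
  rw [survivors, filter_inter, univ_inter]

lemma survivors_subset_erase (j : Fin n) (ω : Ω) : survivors T j ω ⊆ univ.erase j := by
  intro i hi
  simp only [survivors, mem_filter] at hi
  exact mem_erase.2 ⟨fun h => (h ▸ hi.2).false, mem_univ i⟩

lemma relQual_eq_measureReal [MeasurableSpace Ω] (μ : Measure Ω) (j : Fin n)
    (A : Finset (Fin n)) :
    relQual μ T j A = μ.real {ω | survivors T j ω = A} := by
  rw [relQual, measureReal_def]
  congr 2
  ext ω
  simp only [Set.mem_ofPred_eq, Finset.ext_iff, survivors, mem_filter, mem_univ, true_and]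
  constructor
  · rintro ⟨hle, hlt⟩ i
    exact ⟨fun h => by_contra fun hi => (hle i hi).not_gt h, hlt i⟩
  · intro h
    exact ⟨fun i hi => not_lt.1 fun h' => hi ((h i).1 h'), fun i hi => (h i).2 hi⟩

lemma measurableSet_survivors_eq [MeasurableSpace Ω] (hT : ∀ i, Measurable (T i)) (j : Fin n)
    (A : Finset (Fin n)) : MeasurableSet {ω | survivors T j ω = A} := by
  simp only [Finset.ext_iff, survivors, mem_filter, mem_univ, true_and, Set.ofPred_forall]
  refine MeasurableSet.iInter fun i => ?_
  by_cases hi : i ∈ A <;> simp only [hi, iff_true, iff_false, not_lt]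
  · exact measurableSet_lt (hT j) (hT i)
  · exact measurableSet_le (hT i) (hT j)

end Survivors

lemma measure_eq_sum_of_ae_iff_exists {Ω ι : Type*} [MeasurableSpace Ω] {μ : Measure Ω}
    (s : Finset ι) {E : ι → Set Ω} (hE : ∀ i ∈ s, MeasurableSet (E i)) {S : Set Ω}
    (hS : ∀ᵐ ω ∂μ, ω ∈ S ↔ ∃ i ∈ s, ω ∈ E i)
    (hdisj : ∀ᵐ ω ∂μ, ∀ i ∈ s, ∀ j ∈ s, ω ∈ E i → ω ∈ E j → i = j) :
    μ S = ∑ i ∈ s, μ (E i) := by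
  have hSU : S =ᵐ[μ] ⋃ i ∈ s, E i := Filter.eventuallyEq_set.2 <| by
    filter_upwards [hS] with ω hω
    simpa using hω
  rw [measure_congr hSU]
  refine measure_biUnion_finset₀ (fun i hi j hj hij => ?_) fun i hi =>
    (hE i hi).nullMeasurableSet
  rw [Function.onFun, AEDisjoint, measure_eq_zero_iff_ae_notMem]
  filter_upwards [hdisj] with ω hω hωij
  exact hij (hω i hi j hj hωij.1 hωij.2)

lemma ae_injective_of_measure_eq_zero {Ω : Type*} [MeasurableSpace Ω] {μ : Measure Ω} {n : ℕ}
    {T : Fin n → Ω → ℝ} (hties : ∀ i j : Fin n, i ≠ j → μ {ω | T i ω = T j ω} = 0) :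
    ∀ᵐ ω ∂μ, Function.Injective fun i => T i ω := by
  have h : ∀ i j : Fin n, ∀ᵐ ω ∂μ, T i ω = T j ω → i = j := by
    intro i j
    rcases eq_or_ne i j with rfl | hij
    · exact ae_of_all _ fun _ _ => rfl
    · filter_upwards [measure_eq_zero_iff_ae_notMem.1 (hties i j hij)] with ω hω heq
      exact absurd heq hω
  filter_upwards [ae_all_iff.2 fun i => ae_all_iff.2 (h i)] with ω hω i j
  exact hω i j

section Decomposition

variable {Ω : Type*} {n : ℕ} (T : Fin n → Ω → ℝ) {M D : Finset (Fin n)}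
  {φ : Finset (Fin n) → ℝ} {k : ℕ}

lemma sysLifeOn_eq_orderStat_and_eq_iff (hφ : IsSemicoherentOn D φ) (hMD : M ⊆ D) {ω : Ω}
    (hinj : Function.Injective fun i => T i ω) (hk1 : 1 ≤ k) (hkm : k ≤ #M) {j : Fin n}
    (hj : j ∈ M) :
    (sysLifeOn T D φ ω = orderStat T M k ω ∧ orderStat T M k ω = T j ω) ↔
      #(survivors T j ω ∩ M) = #M - k ∧ φ (insert j (survivors T j ω ∩ D)) = 1 ∧
        φ (survivors T j ω ∩ D) = 0 := by
  rw [survivors_inter, survivors_inter, ← sysLifeOn_eq_iff T hφ hinj (hMD hj),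
    ← orderStat_eq_iff T hinj hk1 hkm hj]
  constructor
  · rintro ⟨hsys, hord⟩
    exact ⟨hord, hsys.trans hord⟩
  · rintro ⟨hord, hsys⟩
    exact ⟨hsys.trans hord.symm, hord⟩

theorem measureReal_sysLifeOn_eq_orderStat_eq_sum [MeasurableSpace Ω] (μ : Measure Ω)
    [IsFiniteMeasure μ] (hT : ∀ i, Measurable (T i))
    (hinj : ∀ᵐ ω ∂μ, Function.Injective fun i => T i ω) (hφ : IsSemicoherentOn D φ) (hMD : M ⊆ D) (hk1 : 1 ≤ k) (hkm : k ≤ #M) :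
    μ.real {ω | sysLifeOn T D φ ω = orderStat T M k ω} =
      ∑ j ∈ M, ∑ A ∈ (univ.erase j).powerset,
        (if #(A ∩ M) = #M - k then φ (insert j (A ∩ D)) - φ (A ∩ D) else 0) * relQual μ T j A := by
  classical
  let critical : (Σ _ : Fin n, Finset (Fin n)) → Prop := fun p =>
    #(p.2 ∩ M) = #M - k ∧ φ (insert p.1 (p.2 ∩ D)) = 1 ∧ φ (p.2 ∩ D) = 0
  have hiff : ∀ ω, (Function.Injective fun i => T i ω) → ∀ j ∈ M,
      (sysLifeOn T D φ ω = orderStat T M k ω ∧ orderStat T M k ω = T j ω) ↔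
        critical ⟨j, survivors T j ω⟩ := fun ω hω j hj =>
    sysLifeOn_eq_orderStat_and_eq_iff T hφ hMD hω hk1 hkm hj
  have hdecomp := measure_eq_sum_of_ae_iff_exists (μ := μ)
    ((M.sigma fun j => (univ.erase j).powerset).filter critical)
    (E := fun p => {ω | survivors T p.1 ω = p.2})
    (fun p _ => measurableSet_survivors_eq T hT p.1 p.2)
    (S := {ω | sysLifeOn T D φ ω = orderStat T M k ω}) ?_ ?_
  · rw [measureReal_def, hdecomp, ENNReal.toReal_sum fun _ _ => measure_ne_top _ _, sum_filter,
      sum_sigma]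
    refine sum_congr rfl fun j hj => sum_congr rfl fun A _ => ?_
    rw [relQual_eq_measureReal, measureReal_def,
      hφ.sub_eq_ite (subset_insert _ _) (insert_subset (hMD hj) inter_subset_right)]
    simp only [ite_and]
    split_ifs <;> simp
  · filter_upwards [hinj] with ω hω
    constructor
    · intro h
      obtain ⟨j, hj, hord⟩ := exists_orderStat_eq T M ω hk1 hkm
      refine ⟨⟨j, survivors T j ω⟩, mem_filter.2 ⟨?_, (hiff ω hω j hj).1 ⟨h, hord⟩⟩, rfl⟩
      exact mem_sigma.2 ⟨hj, mem_powerset.2 (survivors_subset_erase T j ω)⟩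
    · rintro ⟨⟨j, A⟩, hp, rfl : survivors T j ω = A⟩
      obtain ⟨hj, -⟩ := mem_sigma.1 (mem_filter.1 hp).1
      exact ((hiff ω hω j hj).2 (mem_filter.1 hp).2).1
  · filter_upwards [hinj] with ω hω
    rintro ⟨j, A⟩ hp ⟨j', A'⟩ hp' (rfl : survivors T j ω = A) (rfl : survivors T j' ω = A')
    obtain ⟨hj, -⟩ := mem_sigma.1 (mem_filter.1 hp).1
    obtain ⟨hj', -⟩ := mem_sigma.1 (mem_filter.1 hp').1
    have hord := ((hiff ω hω j hj).2 (mem_filter.1 hp).2).2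
    have hord' := ((hiff ω hω j' hj').2 (mem_filter.1 hp').2).2
    obtain rfl : j = j' := hω (hord.symm.trans hord')
    rfl

end Decomposition

lemma sum_powerset_mul_eq_mul_sum {α R : Type*} [DecidableEq α] [CommSemiring R]
    (s t : Finset α) (f g : Finset α → R) :
    ∑ A ∈ s.powerset, f (A ∩ t) * g (A \ t) =
      (∑ A ∈ (s ∩ t).powerset, f A) * ∑ B ∈ (s \ t).powerset, g B := by
  rw [sum_mul_sum, ← sum_product']
  refine sum_nbij' (fun A => (A ∩ t, A \ t)) (fun p => p.1 ∪ p.2) ?_ ?_ ?_ ?_ fun _ _ => rfl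
  · intro A hA
    simp only [mem_powerset, mem_product] at hA ⊢
    grind
  · intro p hp
    simp only [mem_powerset, mem_product] at hp ⊢
    grind
  · intro A _
    grind
  · rintro ⟨X, Y⟩ hp
    obtain ⟨hX, hY⟩ : X ⊆ s ∩ t ∧ Y ⊆ s \ t := by
      simpa only [mem_product, mem_powerset] using hp
    refine Prod.ext ?_ ?_ <;> ext x <;> have := @hX x <;> have := @hY x <;> simp at * <;> tauto

lemma sum_powerset_erase_eq_mul {α : Type*} [Fintype α] [DecidableEq α] {M : Finset α} {j : α}
    (hj : j ∈ M) (r : ℕ) (X : Finset α → ℝ) (Z : Finset α → ℕ → ℝ) :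
    ∑ A ∈ (univ.erase j).powerset, (if #(A ∩ M) = r then X (A ∩ M) else 0) * Z (A \ M) #A =
      (∑ A ∈ (M.erase j).powerset, if #A = r then X A else 0) *
        ∑ B ∈ (univ \ M).powerset, Z B (r + #B) := by
  have hinter : univ.erase j ∩ M = M.erase j := by rw [erase_inter, univ_inter]
  have hsdiff : univ.erase j \ M = univ \ M := by
    rw [erase_sdiff_comm, erase_eq_of_notMem (by simp [hj])]
  rw [← hinter, ← hsdiff, ← sum_powerset_mul_eq_mul_sum]
  refine sum_congr rfl fun A _ => ?_
  split_ifs with h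
  · rw [← card_inter_add_card_sdiff A M, h]
  · simp

lemma IsSemicoherentOn.sub_eq_mul_of_module {α : Type*} [DecidableEq α] {M : Finset α}
    {φ χ : Finset α → ℝ} {ψ : Finset α → Bool → ℝ} (hχ : IsSemicoherentOn M χ)
    (hmod : ∀ A, φ A = ψ (A \ M) (if χ (A ∩ M) = 1 then true else false)) {j : α} (hj : j ∈ M)
    (A : Finset α) :
    φ (insert j A) - φ A =
      (χ (insert j (A ∩ M)) - χ (A ∩ M)) * (ψ (A \ M) true - ψ (A \ M) false) := by
  rw [hmod, hmod, insert_sdiff_of_mem _ hj, insert_inter_of_mem hj]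
  exact hχ.apply_ite_sub_apply_ite (subset_insert _ _) (insert_subset hj inter_subset_right)
    (ψ (A \ M))

lemma integral_pow_mul_one_sub_pow_eq_factorial (a b : ℕ) :
    ∫ t in (0 : ℝ)..1, t ^ a * (1 - t) ^ b =
      (a.factorial * b.factorial : ℝ) / (a + b + 1).factorial := by
  induction b generalizing a with
  | zero =>
    simp [Nat.factorial_succ]
    field_simp
  | succ b ih =>
    have hsplit : (fun t : ℝ => t ^ a * (1 - t) ^ (b + 1)) =
        fun t => t ^ a * (1 - t) ^ b - t ^ (a + 1) * (1 - t) ^ b := by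
      funext t; ring
    rw [hsplit, intervalIntegral.integral_sub (Continuous.intervalIntegrable (by fun_prop) _ _)
        (Continuous.intervalIntegrable (by fun_prop) _ _), ih a, ih (a + 1),
      show a + 1 + b + 1 = a + b + 1 + 1 by omega, show a + (b + 1) + 1 = a + b + 1 + 1 by omega,
      Nat.factorial_succ (a + b + 1), Nat.factorial_succ a, Nat.factorial_succ b]
    push_cast
    field_simp
    ring

lemma integral_pow_mul_one_sub_pow (a b : ℕ) :
    ∫ t in (0 : ℝ)..1, t ^ a * (1 - t) ^ b =
      1 / (((a + b + 1 : ℕ) : ℝ) * ((a + b).choose a : ℕ)) := by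
  have h := Nat.add_choose_mul_factorial_mul_factorial b a
  rw [add_comm b a] at h
  rw [integral_pow_mul_one_sub_pow_eq_factorial, Nat.factorial_succ, ← h]
  push_cast
  field_simp

lemma integral_mul_sum_powerset {α : Type*} (s : Finset α) (c : ℝ) (a e N : ℕ) (hs : #s ≤ N)
    (g : Finset α → ℝ) :
    ∫ t in (0 : ℝ)..1, (c * t ^ a * (1 - t) ^ e) *
        ∑ B ∈ s.powerset, t ^ #B * (1 - t) ^ (N - #B) * g B =
      c * ∑ B ∈ s.powerset,
        g B * (1 / (((a + e + N + 1 : ℕ) : ℝ) * ((a + e + N).choose (a + #B) : ℕ))) := by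
  have hexp : ∀ B ∈ s.powerset, a + #B + (e + (N - #B)) = a + e + N := fun B hB => by
    have := card_le_card (mem_powerset.1 hB)
    omega
  calc
    _ = ∫ t in (0 : ℝ)..1, ∑ B ∈ s.powerset,
          c * g B * (t ^ (a + #B) * (1 - t) ^ (e + (N - #B))) := by
      refine intervalIntegral.integral_congr fun t _ => ?_
      simp only [mul_sum]
      exact sum_congr rfl fun B _ => by ring
    _ = ∑ B ∈ s.powerset,
          c * g B * ∫ t in (0 : ℝ)..1, t ^ (a + #B) * (1 - t) ^ (e + (N - #B)) := by
      rw [intervalIntegral.integral_finsetSum fun B _ =>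
        Continuous.intervalIntegrable (by fun_prop) _ _]
      simp only [intervalIntegral.integral_const_mul]
    _ = _ := by
      rw [mul_sum]
      refine sum_congr rfl fun B hB => ?_
      rw [integral_pow_mul_one_sub_pow, hexp B hB]
      ring

lemma integral_beta_density_eq_one {m k : ℕ} (hk1 : 1 ≤ k) (hkm : k ≤ m) :
    ∫ t in (0 : ℝ)..1,
      (m : ℝ) * ((m - 1).choose (m - k) : ℕ) * t ^ (m - k) * (1 - t) ^ (k - 1) = 1 := by
  simp only [mul_assoc]
  rw [intervalIntegral.integral_const_mul, intervalIntegral.integral_const_mul,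
    integral_pow_mul_one_sub_pow, show m - k + (k - 1) = m - 1 by omega,
    Nat.sub_add_cancel (by omega)]
  have : (0 : ℝ) < ((m - 1).choose (m - k) : ℕ) := by exact_mod_cast Nat.choose_pos (by omega)
  have : (0 : ℝ) < m := by exact_mod_cast (by omega : 0 < m)
  field_simp

lemma integral_beta_density_mul_sum_powerset {α : Type*} (s : Finset α) {m n k : ℕ}
    (hk1 : 1 ≤ k) (hkm : k ≤ m) (hmn : m ≤ n) (hs : #s ≤ n - m) (g : Finset α → ℝ) :
    ∫ t in (0 : ℝ)..1,
        ((m : ℝ) * ((m - 1).choose (m - k) : ℕ) * t ^ (m - k) * (1 - t) ^ (k - 1)) *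
        ∑ B ∈ s.powerset, t ^ #B * (1 - t) ^ (n - m - #B) * g B =
      (m : ℝ) * ((m - 1).choose (m - k) : ℕ) *
        ∑ B ∈ s.powerset, g B * (1 / ((n : ℝ) * ((n - 1).choose (m - k + #B) : ℕ))) := by
  rw [integral_mul_sum_powerset _ _ _ _ _ hs, show m - k + (k - 1) + (n - m) = n - 1 by omega,
    Nat.sub_add_cancel (by omega)]

lemma mul_sum_powerset_one_div_choose_eq_one {α : Type*} (s : Finset α) {m n k : ℕ}
    (hk1 : 1 ≤ k) (hkm : k ≤ m) (hmn : m ≤ n) (hs : #s = n - m) :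
    (m : ℝ) * ((m - 1).choose (m - k) : ℕ) *
      ∑ B ∈ s.powerset, 1 / ((n : ℝ) * ((n - 1).choose (m - k + #B) : ℕ)) = 1 := by
  have hsum (t : ℝ) : ∑ B ∈ s.powerset, t ^ #B * (1 - t) ^ (n - m - #B) = 1 := by
    rw [← hs, sum_pow_mul_eq_add_pow, add_sub_cancel, one_pow]
  have h := integral_beta_density_mul_sum_powerset s hk1 hkm hmn hs.le fun _ => 1
  simp only [mul_one, one_mul, hsum] at h
  rw [← h, integral_beta_density_eq_one hk1 hkm]

def pivotalSum {α : Type*} [DecidableEq α] (M : Finset α) (χ : Finset α → ℝ) (r : ℕ) : ℝ :=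
  ∑ j ∈ M, ∑ A ∈ (M.erase j).powerset, if #A = r then χ (insert j A) - χ A else 0

section ExchangeableQualities

variable {Ω : Type*} [MeasurableSpace Ω] {n : ℕ} (T : Fin n → Ω → ℝ) (μ : Measure Ω)
  [IsFiniteMeasure μ] {M : Finset (Fin n)} {χ : Finset (Fin n) → ℝ} {k : ℕ}

theorem measureReal_sysLifeOn_module_eq_pivotalSum_mul (hT : ∀ i, Measurable (T i))
    (hinj : ∀ᵐ ω ∂μ, Function.Injective fun i => T i ω) (hχ : IsSemicoherentOn M χ)
    (u : ℕ → ℝ) (hrelQual : ∀ j ∈ M, ∀ A, j ∉ A → relQual μ T j A = u #A)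
    (hk1 : 1 ≤ k) (hkm : k ≤ #M) :
    μ.real {ω | sysLifeOn T M χ ω = orderStat T M k ω} =
      pivotalSum M χ (#M - k) * ∑ B ∈ (univ \ M).powerset, u (#M - k + #B) := by
  rw [measureReal_sysLifeOn_eq_orderStat_eq_sum T μ hT hinj hχ subset_rfl hk1 hkm, pivotalSum,
    sum_mul]
  refine sum_congr rfl fun j hj => ?_
  rw [← sum_powerset_erase_eq_mul hj _ _ fun _ a => u a]
  refine sum_congr rfl fun A hA => ?_
  rw [hrelQual j hj A fun h => by simpa using mem_powerset.1 hA h]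

theorem measureReal_sysLifeOn_univ_eq_pivotalSum_mul (hT : ∀ i, Measurable (T i))
    (hinj : ∀ᵐ ω ∂μ, Function.Injective fun i => T i ω) {φ : Finset (Fin n) → ℝ}
    (hφ : IsSemicoherentOn univ φ) (hχ : IsSemicoherentOn M χ) {ψ : Finset (Fin n) → Bool → ℝ}
    (hmod : ∀ A, φ A = ψ (A \ M) (if χ (A ∩ M) = 1 then true else false))
    (u : ℕ → ℝ) (hrelQual : ∀ j ∈ M, ∀ A, j ∉ A → relQual μ T j A = u #A)
    (hk1 : 1 ≤ k) (hkm : k ≤ #M) :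
    μ.real {ω | sysLifeOn T univ φ ω = orderStat T M k ω} =
      pivotalSum M χ (#M - k) *
        ∑ B ∈ (univ \ M).powerset, (ψ B true - ψ B false) * u (#M - k + #B) := by
  rw [measureReal_sysLifeOn_eq_orderStat_eq_sum T μ hT hinj hφ (subset_univ M) hk1 hkm, pivotalSum,
    sum_mul]
  refine sum_congr rfl fun j hj => ?_
  rw [← sum_powerset_erase_eq_mul hj _ _ fun B a => (ψ B true - ψ B false) * u a]
  refine sum_congr rfl fun A hA => ?_
  simp only [inter_univ]
  rw [hrelQual j hj A fun h => by simpa using mem_powerset.1 hA h,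
    hχ.sub_eq_mul_of_module hmod hj]
  split_ifs <;> ring

end ExchangeableQualities

/- A subset of the reduced component set `C_M = (C∖M) ∪ {[M]}` is encoded as a pair
consisting of a `Finset (Fin n)` (its part in `C∖M`) and a `Bool` recording whether the
macro-component `[M]` belongs to it; the organizing structure is `ψ : Finset (Fin n) → Bool → ℝ`,
and `Δ_[M]ψ(B) = ψ B true - ψ B false`. -/
theorem stmt_19_general {Ω : Type*} [MeasurableSpace Ω] (μ : Measure Ω) [IsProbabilityMeasure μ]
    {n : ℕ} (T : Fin n → Ω → ℝ) (hTmeas : ∀ i, Measurable (T i))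
    (hties : ∀ i j : Fin n, i ≠ j → μ {ω | T i ω = T j ω} = 0)
    (φ : Finset (Fin n) → ℝ)
    (hφ01 : ∀ A, φ A = 0 ∨ φ A = 1)
    (hφmono : ∀ A B : Finset (Fin n), A ⊆ B → φ A ≤ φ B)
    (hφempty : φ ∅ = 0) (hφfull : φ Finset.univ = 1)
    (M : Finset (Fin n))
    (χ : Finset (Fin n) → ℝ) (ψ : Finset (Fin n) → Bool → ℝ)
    (hχ01 : ∀ A, A ⊆ M → χ A = 0 ∨ χ A = 1)
    (hχmono : ∀ A B : Finset (Fin n), A ⊆ B → B ⊆ M → χ A ≤ χ B)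
    (hχempty : χ ∅ = 0) (hχfull : χ M = 1)
    (hmod : ∀ A : Finset (Fin n),
      φ A = ψ (A \ M) (if χ (A ∩ M) = 1 then true else false))
    (hq : ∀ j ∈ M, ∀ A : Finset (Fin n), j ∉ A →
      relQual μ T j A = 1 / ((n : ℝ) * ((n - 1).choose A.card : ℕ)))
    (k : ℕ) (hk1 : 1 ≤ k) (hkm : k ≤ M.card) :
    (μ {ω | sysLifeOn T Finset.univ φ ω = orderStat T M k ω}).toReal =
      (μ {ω | sysLifeOn T M χ ω = orderStat T M k ω}).toReal *
        ∫ t in (0:ℝ)..1,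
          ((M.card : ℝ) * ((M.card - 1).choose (M.card - k) : ℕ) *
              t ^ (M.card - k) * (1 - t) ^ (k - 1)) *
            ∑ B ∈ ((Finset.univ : Finset (Fin n)) \ M).powerset,
              t ^ B.card * (1 - t) ^ (n - M.card - B.card) * (ψ B true - ψ B false) := by
  have hinj := ae_injective_of_measure_eq_zero hties
  have hφ : IsSemicoherentOn univ φ :=
    ⟨fun A _ => hφ01 A, fun A B hAB _ => hφmono A B hAB, hφempty, hφfull⟩
  have hχ : IsSemicoherentOn M χ := ⟨hχ01, hχmono, hχempty, hχfull⟩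
  have hmn : #M ≤ n := by simpa using card_le_univ M
  have hcard : #(univ \ M) = n - #M := by rw [card_univ_sdiff, Fintype.card_fin]
  let u : ℕ → ℝ := fun a => 1 / ((n : ℝ) * ((n - 1).choose a : ℕ))
  rw [← measureReal_def, ← measureReal_def,
    measureReal_sysLifeOn_univ_eq_pivotalSum_mul T μ hTmeas hinj hφ hχ hmod u hq hk1 hkm,
    measureReal_sysLifeOn_module_eq_pivotalSum_mul T μ hTmeas hinj hχ u hq hk1 hkm,
    integral_beta_density_mul_sum_powerset _ hk1 hkm hmn hcard.le]
  calc
    _ = pivotalSum M χ (#M - k) * ((#M : ℝ) * ((#M - 1).choose (#M - k) : ℕ) *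
          ∑ B ∈ (univ \ M).powerset, 1 / ((n : ℝ) * ((n - 1).choose (#M - k + #B) : ℕ))) *
        ∑ B ∈ (univ \ M).powerset,
          (ψ B true - ψ B false) * (1 / ((n : ℝ) * ((n - 1).choose (#M - k + #B) : ℕ))) := by
      rw [mul_sum_powerset_one_div_choose_eq_one _ hk1 hkm hmn hcard, mul_one]
    _ = _ := by ring

theorem stmt_19 {Ω : Type*} [MeasurableSpace Ω] (μ : Measure Ω) [IsProbabilityMeasure μ]
    {n : ℕ} (T : Fin n → Ω → ℝ) (hTmeas : ∀ i, Measurable (T i))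
    (hTnonneg : ∀ i ω, 0 ≤ T i ω)
    (hties : ∀ i j : Fin n, i ≠ j → μ {ω | T i ω = T j ω} = 0)
    (φ : Finset (Fin n) → ℝ)
    (hφ01 : ∀ A, φ A = 0 ∨ φ A = 1)
    (hφmono : ∀ A B : Finset (Fin n), A ⊆ B → φ A ≤ φ B)
    (hφempty : φ ∅ = 0) (hφfull : φ Finset.univ = 1)
    (M : Finset (Fin n)) (hM : M.Nonempty)
    (χ : Finset (Fin n) → ℝ) (ψ : Finset (Fin n) → Bool → ℝ)
    (hχ01 : ∀ A, A ⊆ M → χ A = 0 ∨ χ A = 1)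
    (hχmono : ∀ A B : Finset (Fin n), A ⊆ B → B ⊆ M → χ A ≤ χ B)
    (hχempty : χ ∅ = 0) (hχfull : χ M = 1)
    (hψ01 : ∀ B b, B ⊆ Finset.univ \ M → ψ B b = 0 ∨ ψ B b = 1)
    (hψmono : ∀ (B B' : Finset (Fin n)) (b b' : Bool), B ⊆ B' → B' ⊆ Finset.univ \ M →
      (b = true → b' = true) → ψ B b ≤ ψ B' b')
    (hψempty : ψ ∅ false = 0) (hψfull : ψ (Finset.univ \ M) true = 1)
    (hmod : ∀ A : Finset (Fin n),
      φ A = ψ (A \ M) (if χ (A ∩ M) = 1 then true else false))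
    (hq : ∀ j ∈ M, ∀ A : Finset (Fin n), j ∉ A →
      relQual μ T j A = 1 / ((n : ℝ) * ((n - 1).choose A.card : ℕ)))
    (k : ℕ) (hk1 : 1 ≤ k) (hkm : k ≤ M.card) :
    (μ {ω | sysLifeOn T Finset.univ φ ω = orderStat T M k ω}).toReal =
      (μ {ω | sysLifeOn T M χ ω = orderStat T M k ω}).toReal *
        ∫ t in (0:ℝ)..1,
          ((M.card : ℝ) * ((M.card - 1).choose (M.card - k) : ℕ) *
              t ^ (M.card - k) * (1 - t) ^ (k - 1)) *
            ∑ B ∈ ((Finset.univ : Finset (Fin n)) \ M).powerset,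
              t ^ B.card * (1 - t) ^ (n - M.card - B.card) * (ψ B true - ψ B false) :=
  stmt_19_general μ T hTmeas hties φ hφ01 hφmono hφempty hφfull M χ ψ hχ01 hχmono hχempty hχfull
    hmod hq k hk1 hkm
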